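/- Let K be a field of characteristic zero or characteristic p with m ≤ p-1, m ≥ 5. No nontrivial solution (x₁,...,x_m) of the system x₁^k + ... + x_m^k = 0 (1 ≤ k ≤ m-2) has three coordinates with pairwise distinct indices i₁,i₂,i₃ such that x_{i₁} = x_{i₂} = x_{i₃}. -/

import Mathlib

/-!
Newton's identities turn the vanishing power sums of degrees `1, …, m-2` into vanishing
elementary symmetric functions of the same degrees, so `f = ∏ (X - xᵢ)` is a trinomial
`X ^ m + a X + b`. A coordinate value `c` taken three times is a root of `f'' = m (m-1) X ^ (m-2)`,
hence `c = 0`; then `f'(0) = a` and `f(0) = b` vanish as well, so `f = X ^ m` and every `xᵢ` is `0`.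
-/

open Polynomial Finset

theorem natCast_ne_zero_of_charP_zero_or_lt {R : Type*} [AddMonoidWithOne R] {p m : ℕ}
    (hchar : CharP R 0 ∨ CharP R p ∧ m < p) {k : ℕ} (hk : 0 < k) (hkm : k ≤ m) :
    (k : R) ≠ 0 := by
  rcases hchar with hchar | ⟨hchar, hmp⟩
  · rw [Ne, CharP.cast_eq_zero_iff R 0, zero_dvd_iff]
    exact hk.ne'
  · rw [Ne, CharP.cast_eq_zero_iff R p]
    exact Nat.not_dvd_of_pos_of_lt hk (by omega)

theorem MvPolynomial.esymm_map_eq_zero_of_sum_pow_eq_zero {σ R : Type*} [Fintype σ]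
    [CommRing R] [NoZeroDivisors R] (x : σ → R) {n : ℕ}
    (hn : ∀ k, 1 ≤ k → k ≤ n → (k : R) ≠ 0) (hx : ∀ k, 1 ≤ k → k ≤ n → ∑ i, x i ^ k = 0)
    {k : ℕ} (hk : 1 ≤ k) (hkn : k ≤ n) : (univ.val.map x).esymm k = 0 := by
  have hnewton := congrArg (aeval x) (mul_esymm_eq_sum σ R k)
  simp only [map_mul, map_natCast, map_pow, map_neg, map_one, map_sum,
    aeval_esymm_eq_multiset_esymm] at hnewton
  rw [Finset.sum_eq_zero, mul_zero] at hnewton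
  · exact (mul_eq_zero.mp hnewton).resolve_left (hn k hk hkn)
  · rintro ⟨a, b⟩ hab
    rw [mem_filter, HasAntidiagonal.mem_antidiagonal] at hab
    simp [psum, hx b (by omega) (by omega)]

theorem Multiset.card_le_count_map_univ {σ α : Type*} [Fintype σ] [DecidableEq α] (x : σ → α)
    {c : α} (t : Finset σ) (ht : ∀ i ∈ t, x i = c) : #t ≤ (univ.val.map x).count c := by
  rw [Multiset.count_map, ← Finset.filter_val, ← Finset.card_def]
  exact Finset.card_le_card fun i hi => Finset.mem_filter.mpr ⟨mem_univ i, (ht i hi).symm⟩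

theorem Multiset.exists_prod_X_sub_C_eq_X_pow_add_C_mul_X_add_C {R : Type*} [CommRing R]
    [Nontrivial R] (s : Multiset R) (hs : 2 ≤ Multiset.card s)
    (he : ∀ k, 1 ≤ k → k ≤ Multiset.card s - 2 → s.esymm k = 0) :
    ∃ a b : R, (s.map fun t => X - C t).prod = X ^ Multiset.card s + C a * X + C b := by
  set f := (s.map fun t => X - C t).prod
  refine ⟨f.coeff 1, f.coeff 0, Polynomial.ext fun n => ?_⟩
  simp only [coeff_add, coeff_X_pow, coeff_C_mul_X, coeff_C]
  rcases lt_trichotomy n (Multiset.card s) with hn | rfl | hn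
  · rcases n with _ | _ | n
    · simp [hn.ne]
    · simp [hn.ne]
    · rw [Multiset.prod_X_sub_C_coeff s hn.le, he _ (by omega) (by omega)]
      simp [hn.ne]
  · rw [Multiset.prod_X_sub_C_coeff s le_rfl]
    simp [Multiset.esymm, show Multiset.card s ≠ 0 by omega, show Multiset.card s ≠ 1 by omega]
  · rw [coeff_eq_zero_of_natDegree_lt (by rwa [natDegree_multiset_prod_X_sub_C_eq_card])]
    simp [hn.ne', show n ≠ 0 by omega, show n ≠ 1 by omega]

theorem Polynomial.eq_zero_of_three_le_rootMultiplicity_X_pow_add_C_mul_X_add_C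
    {K : Type*} [Field K] {n : ℕ} {a b c : K} (hn : (n : K) ≠ 0) (hn' : ((n - 1 : ℕ) : K) ≠ 0)
    (hc : 3 ≤ rootMultiplicity c (X ^ n + C a * X + C b)) : a = 0 ∧ b = 0 := by
  have hroot (i : ℕ) (hi : i < 3) :=
    isRoot_iterate_derivative_of_lt_rootMultiplicity (hi.trans_le hc)
  have hn0 : n ≠ 0 := by rintro rfl; simp at hn
  have hn1 : n - 1 ≠ 0 := by intro h; simp [h] at hn'
  obtain ⟨rfl, -⟩ : c = 0 ∧ n - 1 - 1 ≠ 0 := by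
    simpa [derivative_X_pow, hn, hn'] using hroot 2 (by norm_num)
  exact ⟨by simpa [derivative_X_pow, hn1] using hroot 1 (by norm_num),
    by simpa [hn0] using hroot 0 (by norm_num)⟩

/-- No nontrivial solution of the power-sum system of degrees 1..m-2 has three
equal coordinates with pairwise distinct indices. -/
theorem stmt4 {K : Type*} [Field K] (p m : ℕ) (hm : 5 ≤ m)
    (hchar : CharP K 0 ∨ (p.Prime ∧ 0 < p ∧ CharP K p ∧ m ≤ p - 1))
    (x : Fin m → K) (hx : x ≠ 0)
    (hsol : ∀ k : ℕ, 1 ≤ k → k ≤ m - 2 → ∑ i, x i ^ k = 0) :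
    ¬ ∃ i₁ i₂ i₃ : Fin m, i₁ ≠ i₂ ∧ i₁ ≠ i₃ ∧ i₂ ≠ i₃ ∧
      x i₁ = x i₂ ∧ x i₂ = x i₃ := by
  classical
  rintro ⟨i₁, i₂, i₃, h12, h13, h23, e12, e23⟩
  have hcast {k : ℕ} (hk : 0 < k) (hkm : k ≤ m) : (k : K) ≠ 0 :=
    natCast_ne_zero_of_charP_zero_or_lt (hchar.imp_right fun h => ⟨h.2.2.1, by omega⟩) hk hkm
  set s := univ.val.map x
  have hcard : Multiset.card s = m := by simp [s]
  obtain ⟨a, b, hf⟩ := s.exists_prod_X_sub_C_eq_X_pow_add_C_mul_X_add_C (by omega)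
    fun k hk hkm => MvPolynomial.esymm_map_eq_zero_of_sum_pow_eq_zero x
      (fun j hj hjm => hcast hj (by omega)) hsol hk (by omega)
  rw [hcard] at hf
  have hmult : 3 ≤ rootMultiplicity (x i₁) (X ^ m + C a * X + C b) := by
    rw [← hf, ← count_roots, roots_multiset_prod_X_sub_C]
    refine (card_eq_three.mpr ⟨_, _, _, h12, h13, h23, rfl⟩).ge.trans
      (Multiset.card_le_count_map_univ x _ ?_)
    simp [e12, e23]
  obtain ⟨rfl, rfl⟩ := eq_zero_of_three_le_rootMultiplicity_X_pow_add_C_mul_X_add_C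
    (hcast (by omega) le_rfl) (hcast (by omega) (by omega)) hmult
  have hs : s = m • {0} := by simpa [hf] using (roots_multiset_prod_X_sub_C s).symm
  refine hx (funext fun i => ?_)
  have hi : x i ∈ m • ({0} : Multiset K) := hs ▸ Multiset.mem_map_of_mem x (mem_univ_val i)
  exact Multiset.mem_singleton.mp (Multiset.mem_of_mem_nsmul hi)
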